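/- (Yuan's Lemma, first-order cone version) Let P, Q ∈ ℝⁿˣⁿ be symmetric matrices and K ⊆ ℝⁿ a first-order cone. The following are equivalent: (i) max{dᵀPd, dᵀQd} ≥ 0 for all d ∈ K; (ii) there exist α ≥ 0 and β ≥ 0 with α + β = 1 such that dᵀ(αP + βQ)d ≥ 0 for all d ∈ K. -/
import Mathlib


open scoped BigOperators Pointwise
open Matrix

attribute [local instance] Classical.propDecidable

noncomputable section

/-- The gradient vector of `φ` at `x` (the vector of partial derivatives). -/
def gradVec {n : ℕ} (φ : (Fin n → ℝ) → ℝ) (x : Fin n → ℝ) : Fin n → ℝ :=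
  fun k => fderiv ℝ φ x (Pi.single k 1)

/-- The quadratic form `d ↦ dᵀ ∇²φ(x) d` of the Hessian of `φ` at `x`. -/
def hessQ {n : ℕ} (φ : (Fin n → ℝ) → ℝ) (x d : Fin n → ℝ) : ℝ :=
  iteratedFDeriv ℝ 2 φ x ![d, d]

/-- Feasibility for the problem (NLP). -/
def Feas {n m p : ℕ} (h : Fin m → (Fin n → ℝ) → ℝ) (g : Fin p → (Fin n → ℝ) → ℝ)
    (x : Fin n → ℝ) : Prop :=
  (∀ i, h i x = 0) ∧ ∀ j, g j x ≤ 0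

/-- The Lagrangian of (NLP). -/
def Lagr {n m p : ℕ} (f : (Fin n → ℝ) → ℝ) (h : Fin m → (Fin n → ℝ) → ℝ)
    (g : Fin p → (Fin n → ℝ) → ℝ) (lam : Fin m → ℝ) (mu : Fin p → ℝ) (x : Fin n → ℝ) : ℝ :=
  f x + ∑ i, lam i * h i x + ∑ j, mu j * g j x

/-- `(lam, mu)` is a Lagrange multiplier at `xs`, i.e. `(lam, mu) ∈ Λ(xs)`. -/
def IsLagMult {n m p : ℕ} (f : (Fin n → ℝ) → ℝ) (h : Fin m → (Fin n → ℝ) → ℝ)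
    (g : Fin p → (Fin n → ℝ) → ℝ) (xs : Fin n → ℝ) (lam : Fin m → ℝ) (mu : Fin p → ℝ) : Prop :=
  (∀ j, 0 ≤ mu j) ∧ fderiv ℝ (Lagr f h g lam mu) xs = 0 ∧ ∀ j, mu j * g j xs = 0

/-- The Mangasarian-Fromovitz constraint qualification at `xs`. -/
def MFCQ {n m p : ℕ} (h : Fin m → (Fin n → ℝ) → ℝ) (g : Fin p → (Fin n → ℝ) → ℝ)
    (xs : Fin n → ℝ) : Prop :=
  LinearIndependent ℝ (fun i : Fin m => fderiv ℝ (h i) xs) ∧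
  ∃ d : Fin n → ℝ, (∀ i, fderiv ℝ (h i) xs d = 0) ∧
    ∀ j, g j xs = 0 → fderiv ℝ (g j) xs d < 0

/-- Membership in the critical cone `C(xs)`. -/
def critCone {n m p : ℕ} (f : (Fin n → ℝ) → ℝ) (h : Fin m → (Fin n → ℝ) → ℝ)
    (g : Fin p → (Fin n → ℝ) → ℝ) (xs d : Fin n → ℝ) : Prop :=
  fderiv ℝ f xs d = 0 ∧ (∀ i, fderiv ℝ (h i) xs d = 0) ∧
    ∀ j, g j xs = 0 → fderiv ℝ (g j) xs d ≤ 0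

/-- Membership in the critical subspace `S(xs)`. -/
def critSub {n m p : ℕ} (h : Fin m → (Fin n → ℝ) → ℝ) (g : Fin p → (Fin n → ℝ) → ℝ)
    (xs d : Fin n → ℝ) : Prop :=
  (∀ i, fderiv ℝ (h i) xs d = 0) ∧ ∀ j, g j xs = 0 → fderiv ℝ (g j) xs d = 0

/-- The Jacobian matrix `J(x)` of equality and active inequality constraints
(activity taken at the base point `xs`). -/
def Jac {n m p : ℕ} (h : Fin m → (Fin n → ℝ) → ℝ) (g : Fin p → (Fin n → ℝ) → ℝ)
    (xs x : Fin n → ℝ) : Matrix (Fin m ⊕ {j : Fin p // g j xs = 0}) (Fin n) ℝ :=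
  Matrix.of fun i k =>
    Sum.elim (fun i' => fderiv ℝ (h i') x (Pi.single k 1))
      (fun j' => fderiv ℝ (g j'.1) x (Pi.single k 1)) i

/-- A first-order cone: the (direct) sum of a linear subspace and a ray. -/
def IsFirstOrderCone {n : ℕ} (K : Set (Fin n → ℝ)) : Prop :=
  ∃ (W : Submodule ℝ (Fin n → ℝ)) (d0 : Fin n → ℝ),
    K = {x | ∃ w ∈ W, ∃ r : ℝ, 0 ≤ r ∧ x = w + r • d0}

/-- The rank of a family of vectors: the dimension of its linear span. -/
def famRank {ι : Type*} {n : ℕ} (v : ι → (Fin n → ℝ)) : ℕ :=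
  Module.finrank ℝ (Submodule.span ℝ (Set.range v))

def qf (M : Matrix (Fin n) (Fin n) ℝ) (d : Fin n → ℝ) : ℝ := d ⬝ᵥ M *ᵥ d

lemma qf_continuous (M : Matrix (Fin n) (Fin n) ℝ) : Continuous (qf M) := by
  unfold qf
  simp only [Matrix.mulVec, dotProduct]
  fun_prop

lemma dot_symm (M : Matrix (Fin n) (Fin n) ℝ) (hM : M.IsSymm) (x y : Fin n → ℝ) :
    y ⬝ᵥ M *ᵥ x = x ⬝ᵥ M *ᵥ y := by
  conv_lhs => rw [← hM]
  rw [Matrix.mulVec_transpose, dotProduct_comm, ← Matrix.dotProduct_mulVec]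

lemma qf_expand2 (M : Matrix (Fin n) (Fin n) ℝ) (hM : M.IsSymm) (a b : ℝ) (x y : Fin n → ℝ) :
    qf M (a • x + b • y) =
      a^2 * qf M x + 2*(a*b)*(x ⬝ᵥ M *ᵥ y) + b^2 * qf M y := by
  have h := dot_symm M hM x y
  simp only [qf, Matrix.mulVec_add, Matrix.mulVec_smul, dotProduct_add, add_dotProduct,
    dotProduct_smul, smul_dotProduct, smul_eq_mul]
  rw [h]; ring

lemma qf_neg (M : Matrix (Fin n) (Fin n) ℝ) (d : Fin n → ℝ) : qf M (-d) = qf M d := by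
  simp [qf, Matrix.mulVec_neg, dotProduct_neg, neg_dotProduct]

lemma qf_comb (P Q : Matrix (Fin n) (Fin n) ℝ) (α β : ℝ) (d : Fin n → ℝ) :
    d ⬝ᵥ (α • P + β • Q) *ᵥ d = α * qf P d + β * qf Q d := by
  simp [qf, Matrix.add_mulVec, Matrix.smul_mulVec, dotProduct_add, dotProduct_smul,
    smul_eq_mul]

lemma yuan_sub (P Q : Matrix (Fin n) (Fin n) ℝ) (hP : P.IsSymm) (hQ : Q.IsSymm)
    (V : Submodule ℝ (Fin n → ℝ))
    (h : ∀ d ∈ V, 0 ≤ max (qf P d) (qf Q d)) :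
    ∃ α β : ℝ, 0 ≤ α ∧ 0 ≤ β ∧ α + β = 1 ∧ ∀ d ∈ V, 0 ≤ α * qf P d + β * qf Q d := by
  by_contra hc
  push_neg at hc
  have hc' : ∀ α ∈ Set.Icc (0:ℝ) 1, ∃ d ∈ V, α * qf P d + (1-α) * qf Q d < 0 := by
    intro α hα
    obtain ⟨d, hd, hlt⟩ := hc α (1-α) hα.1 (by linarith [hα.2]) (by ring)
    exact ⟨d, hd, hlt⟩
  -- two open sets
  have hopen : ∀ R : Matrix (Fin n) (Fin n) ℝ,
      IsOpen {α : ℝ | ∃ d ∈ V, α * qf P d + (1-α) * qf Q d < 0 ∧ qf R d < 0} := by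
    intro R
    rw [isOpen_iff_mem_nhds]
    rintro α ⟨d, hdV, hlt, hRd⟩
    have hco : Continuous fun β : ℝ => β * qf P d + (1-β) * qf Q d := by fun_prop
    have ho : IsOpen {β : ℝ | β * qf P d + (1-β) * qf Q d < 0} :=
      isOpen_lt hco continuous_const
    exact Filter.mem_of_superset (ho.mem_nhds hlt) (fun β hβ => ⟨d, hdV, hβ, hRd⟩)
  have hcover : Set.Icc (0:ℝ) 1 ⊆
      {α : ℝ | ∃ d ∈ V, α * qf P d + (1-α) * qf Q d < 0 ∧ qf Q d < 0} ∪
      {α : ℝ | ∃ d ∈ V, α * qf P d + (1-α) * qf Q d < 0 ∧ qf P d < 0} := by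
    intro α hα
    obtain ⟨d, hdV, hlt⟩ := hc' α hα
    have : qf Q d < 0 ∨ qf P d < 0 := by
      by_contra hcon
      push_neg at hcon
      nlinarith [hα.1, hα.2, hcon.1, hcon.2]
    rcases this with hq | hp
    · exact Or.inl ⟨d, hdV, hlt, hq⟩
    · exact Or.inr ⟨d, hdV, hlt, hp⟩
  have h0 : (Set.Icc (0:ℝ) 1 ∩
      {α : ℝ | ∃ d ∈ V, α * qf P d + (1-α) * qf Q d < 0 ∧ qf Q d < 0}).Nonempty := by
    obtain ⟨d, hdV, hlt⟩ := hc' 0 (by constructor <;> norm_num)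
    exact ⟨0, ⟨le_refl _, zero_le_one⟩, ⟨d, hdV, hlt, by linarith⟩⟩
  have h1 : (Set.Icc (0:ℝ) 1 ∩
      {α : ℝ | ∃ d ∈ V, α * qf P d + (1-α) * qf Q d < 0 ∧ qf P d < 0}).Nonempty := by
    obtain ⟨d, hdV, hlt⟩ := hc' 1 (by constructor <;> norm_num)
    exact ⟨1, ⟨zero_le_one, le_refl _⟩, ⟨d, hdV, hlt, by linarith⟩⟩
  obtain ⟨α, hαIcc, hα₁, hα₂⟩ :=
    isPreconnected_Icc _ _ (hopen Q) (hopen P) hcover h0 h1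
  obtain ⟨u, huV, hfu, hqu⟩ := hα₁
  obtain ⟨v, hvV, hfv, hpv⟩ := hα₂
  have hα0 : (0:ℝ) ≤ α := hαIcc.1
  have hα1 : α ≤ 1 := hαIcc.2
  -- key quantities
  set pu := qf P u with hpu_def
  set qu := qf Q u with hqu_def
  set pv := qf P v with hpv_def
  set qv := qf Q v with hqv_def
  set mP := u ⬝ᵥ P *ᵥ v with hmP_def
  set mQ := u ⬝ᵥ Q *ᵥ v with hmQ_def
  set B := α * mP + (1-α) * mQ with hB_def
  set s : ℝ := if 0 ≤ B then -1 else 1 with hs_def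
  have hs2 : s^2 = 1 := by
    rw [hs_def]; split <;> norm_num
  have hsB : s * B ≤ 0 := by
    rw [hs_def]; split <;> nlinarith
  set γ : ℝ → (Fin n → ℝ) := fun t => (1-t) • u + (t*s) • v with hγ_def
  have hγV : ∀ t, γ t ∈ V := fun t =>
    V.add_mem (V.smul_mem _ huV) (V.smul_mem _ hvV)
  have hPt : ∀ t, qf P (γ t) = (1-t)^2 * pu + 2*((1-t)*(t*s))*mP + (t*s)^2 * pv :=
    fun t => qf_expand2 P hP (1-t) (t*s) u v
  have hQt : ∀ t, qf Q (γ t) = (1-t)^2 * qu + 2*((1-t)*(t*s))*mQ + (t*s)^2 * qv :=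
    fun t => qf_expand2 Q hQ (1-t) (t*s) u v
  have hneg : ∀ t ∈ Set.Icc (0:ℝ) 1, α * qf P (γ t) + (1-α) * qf Q (γ t) < 0 := by
    intro t ht
    rw [hPt, hQt]
    have h1t : (0:ℝ) ≤ 1 - t := by linarith [ht.2]
    have h2 : α * ((1-t)^2 * pu + 2*((1-t)*(t*s))*mP + (t*s)^2 * pv)
        + (1-α) * ((1-t)^2 * qu + 2*((1-t)*(t*s))*mQ + (t*s)^2 * qv)
        = (1-t)^2 * (α*pu + (1-α)*qu) + 2*((1-t)*t)*(s*B) + t^2 * (α*pv + (1-α)*qv) := by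
      rw [hB_def]
      linear_combination (t^2 * (α*pv + (1-α)*qv)) * hs2
    rw [h2]
    rcases eq_or_lt_of_le ht.2 with h1' | h1'
    · rw [h1']
      norm_num
      linarith [hfv]
    · have e1 : (1-t)^2 * (α*pu+(1-α)*qu) < 0 :=
        mul_neg_of_pos_of_neg (pow_pos (by linarith) 2) hfu
      have e2 : 2*((1-t)*t)*(s*B) ≤ 0 :=
        mul_nonpos_of_nonneg_of_nonpos (by nlinarith [ht.1]) hsB
      have e3 : t^2*(α*pv+(1-α)*qv) ≤ 0 :=
        mul_nonpos_of_nonneg_of_nonpos (sq_nonneg t) hfv.le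
      linarith
  -- second connectedness argument
  have hγcont : Continuous γ := by
    rw [hγ_def]; fun_prop
  have hoP : IsOpen {t : ℝ | qf P (γ t) < 0} :=
    isOpen_lt ((qf_continuous P).comp hγcont) continuous_const
  have hoQ : IsOpen {t : ℝ | qf Q (γ t) < 0} :=
    isOpen_lt ((qf_continuous Q).comp hγcont) continuous_const
  have hcov2 : Set.Icc (0:ℝ) 1 ⊆ {t : ℝ | qf P (γ t) < 0} ∪ {t : ℝ | qf Q (γ t) < 0} := by
    intro t ht
    have := hneg t ht
    by_contra hcon
    simp only [Set.mem_union, Set.mem_setOf_eq, not_or, not_lt] at hcon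
    nlinarith [hcon.1, hcon.2]
  have hQ0 : (Set.Icc (0:ℝ) 1 ∩ {t : ℝ | qf Q (γ t) < 0}).Nonempty := by
    refine ⟨0, ⟨le_refl _, zero_le_one⟩, ?_⟩
    have : γ 0 = u := by rw [hγ_def]; simp
    simp only [Set.mem_setOf_eq, this]
    exact hqu
  have hP1 : (Set.Icc (0:ℝ) 1 ∩ {t : ℝ | qf P (γ t) < 0}).Nonempty := by
    refine ⟨1, ⟨zero_le_one, le_refl _⟩, ?_⟩
    simp only [Set.mem_setOf_eq]
    rw [hPt 1]
    nlinarith [hs2]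
  obtain ⟨t, htIcc, htP, htQ⟩ :=
    isPreconnected_Icc _ _ hoP hoQ hcov2 hP1 hQ0
  have hmax := h (γ t) (hγV t)
  have : max (qf P (γ t)) (qf Q (γ t)) < 0 := max_lt htP htQ
  linarith

/-- Yuan's Lemma for first-order cones. -/
theorem stmt4 {n : ℕ} (P Q : Matrix (Fin n) (Fin n) ℝ) (hP : P.IsSymm) (hQ : Q.IsSymm)
    (K : Set (Fin n → ℝ)) (hK : IsFirstOrderCone K) :
    (∀ d ∈ K, 0 ≤ max (d ⬝ᵥ P.mulVec d) (d ⬝ᵥ Q.mulVec d)) ↔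
      ∃ α β : ℝ, 0 ≤ α ∧ 0 ≤ β ∧ α + β = 1 ∧
        ∀ d ∈ K, 0 ≤ d ⬝ᵥ (α • P + β • Q).mulVec d := by
  obtain ⟨W, d0, hKeq⟩ := hK
  have hmemK : ∀ w ∈ W, ∀ r : ℝ, 0 ≤ r → w + r • d0 ∈ K := by
    intro w hw r hr; rw [hKeq]; exact ⟨w, hw, r, hr, rfl⟩
  constructor
  · intro h1
    set V := W ⊔ Submodule.span ℝ {d0} with hV_def
    have hV : ∀ d ∈ V, 0 ≤ max (qf P d) (qf Q d) := by
      intro d hd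
      rw [hV_def, Submodule.mem_sup] at hd
      obtain ⟨w, hw, z, hz, hwz⟩ := hd
      rw [Submodule.mem_span_singleton] at hz
      obtain ⟨r, rfl⟩ := hz
      rcases le_or_gt 0 r with hr | hr
      · have := h1 _ (hmemK w hw r hr)
        rw [hwz] at this
        exact this
      · have hnd : -d ∈ K := by
          have : -d = -w + (-r) • d0 := by
            rw [← hwz]; module
          rw [this]
          exact hmemK (-w) (W.neg_mem hw) (-r) (by linarith)
        have := h1 _ hnd
        rw [show (-d) ⬝ᵥ P.mulVec (-d) = qf P d from qf_neg P d,
          show (-d) ⬝ᵥ Q.mulVec (-d) = qf Q d from qf_neg Q d] at this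
        exact this
    obtain ⟨α, β, hα, hβ, hαβ, hpos⟩ := yuan_sub P Q hP hQ V hV
    refine ⟨α, β, hα, hβ, hαβ, fun d hd => ?_⟩
    have hdV : d ∈ V := by
      rw [hKeq] at hd
      obtain ⟨w, hw, r, hr, rfl⟩ := hd
      exact V.add_mem (Submodule.mem_sup_left hw)
        (Submodule.mem_sup_right (Submodule.smul_mem _ r (Submodule.mem_span_singleton_self d0)))
    rw [show d ⬝ᵥ (α • P + β • Q).mulVec d = α * qf P d + β * qf Q d from qf_comb P Q α β d]
    exact hpos d hdV
  · rintro ⟨α, β, hα, hβ, hαβ, hpos⟩ d hd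
    have hq := hpos d hd
    rw [show d ⬝ᵥ (α • P + β • Q).mulVec d = α * qf P d + β * qf Q d from qf_comb P Q α β d] at hq
    set m := max (d ⬝ᵥ P.mulVec d) (d ⬝ᵥ Q.mulVec d) with hm
    have e1 : α * qf P d ≤ α * m := mul_le_mul_of_nonneg_left (le_max_left _ _) hα
    have e2 : β * qf Q d ≤ β * m := mul_le_mul_of_nonneg_left (le_max_right _ _) hβ
    have e3 : α * m + β * m = m := by rw [← add_mul, hαβ, one_mul]
    linarith
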